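/- Let $R$ be a discrete valuation ring with uniformizer $\pi$ and residue field $k$. Let $A$ be a Noetherian local $R$-algebra in which $\pi$ is not a unit, and let $f$ be an $R$-algebra automorphism of $A$ of finite order $n$, where $n$ is invertible in $k$. If $f$ induces the identity on $A/\pi A$, then $f$ is the identity on $A$. -/

import Mathlib

/-!
Put `δ = f - 1` in `Module.End R A`. Since `f ^ n = 1`, we have
`0 = (∑_{i<n} f ^ i) δ = (n + Q δ) δ` for a polynomial `Q` in `f`, and `n` is invertible, so
`δ = U δ²`. As `δ` is `R`-linear and maps `A` into `πA`, it maps `π^k A` into `π^(k+1) A`;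
hence `δ = U ∘ δ ∘ δ` maps `A` into `π^k A` for every `k`, and Krull's intersection theorem
gives `δ = 0`.
-/

open Finset

theorem exists_sub_one_eq_mul_sq_of_pow_eq_one {S : Type*} [Ring S] {F : S} {n : ℕ}
    (hF : F ^ n = 1) (hn : IsUnit (n : S)) : ∃ U : S, F - 1 = U * (F - 1) ^ 2 := by
  set Q := ∑ i ∈ range n, ∑ j ∈ range i, F ^ j
  have hgeom : ∑ i ∈ range n, F ^ i = n + Q * (F - 1) := by
    rw [sum_mul]
    simp_rw [geom_sum_mul, sum_sub_distrib]
    simp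
  have hkey : n * (F - 1) + Q * (F - 1) ^ 2 = 0 := by
    rw [sq, ← mul_assoc, ← add_mul, ← hgeom, geom_sum_mul, hF, sub_self]
  obtain ⟨u, hu⟩ := hn
  refine ⟨-(↑u⁻¹ * Q), ?_⟩
  calc F - 1 = ↑u⁻¹ * (n * (F - 1)) := by rw [← mul_assoc, ← hu, Units.inv_mul, one_mul]
    _ = -(↑u⁻¹ * Q) * (F - 1) ^ 2 := by rw [eq_neg_of_add_eq_zero_left hkey]; noncomm_ring

section

variable {R A : Type*} [CommSemiring R] [Semiring A] [Algebra R A]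

theorem LinearMap.algebraMap_dvd_apply (φ : A →ₗ[R] A) {r : R} {x : A}
    (h : algebraMap R A r ∣ x) : algebraMap R A r ∣ φ x := by
  obtain ⟨b, rfl⟩ := h
  exact ⟨φ b, φ.map_algebraMap_mul b r⟩

theorem Module.End.algebraMap_pow_dvd_of_eq_mul_sq {δ U : Module.End R A} (hδU : δ = U * δ ^ 2)
    {r : R} (hδ : ∀ a, algebraMap R A r ∣ δ a) (k : ℕ) (a : A) :
    algebraMap R A r ^ k ∣ δ a := by
  induction k generalizing a with
  | zero => simp
  | succ k ih =>
    obtain ⟨b, hb⟩ := ih a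
    have hδδ : algebraMap R A (r ^ (k + 1)) ∣ δ (δ a) := by
      rw [hb, ← map_pow, LinearMap.map_algebraMap_mul, pow_succ, map_mul]
      exact mul_dvd_mul_left _ (hδ b)
    rw [hδU, sq, Module.End.mul_apply, Module.End.mul_apply, ← map_pow]
    exact U.algebraMap_dvd_apply hδδ

end

theorem IsLocalRing.eq_zero_of_forall_pow_dvd {A : Type*} [CommRing A] [IsNoetherianRing A]
    [IsLocalRing A] {p x : A} (hp : p ∈ maximalIdeal A) (hx : ∀ k : ℕ, p ^ k ∣ x) : x = 0 := by
  have hne : Ideal.span {p} ≠ ⊤ := by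
    rwa [Ne, Ideal.span_singleton_eq_top, ← mem_nonunits_iff, ← mem_maximalIdeal]
  rw [← Ideal.mem_bot, ← Ideal.iInf_pow_eq_bot_of_isLocalRing _ hne, Ideal.mem_iInf]
  intro k
  rw [Ideal.span_singleton_pow, Ideal.mem_span_singleton]
  exact hx k

theorem stmt0_general {R A : Type*} [CommRing R] [IsDomain R] [IsDiscreteValuationRing R]
    [CommRing A] [IsNoetherianRing A] [IsLocalRing A] [Algebra R A]
    (π : R)
    (hπA : algebraMap R A π ∈ IsLocalRing.maximalIdeal A)
    (f : A ≃ₐ[R] A) (n : ℕ) (hfn : f ^ n = 1)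
    (hk : (n : IsLocalRing.ResidueField R) ≠ 0)
    (hf : ∀ a : A, f a - a ∈ Ideal.span {algebraMap R A π}) :
    f = 1 := by
  have hnR : IsUnit (n : R) :=
    (IsLocalRing.residue_ne_zero_iff_isUnit _).mp (by rwa [map_natCast])
  have hnEnd : IsUnit (n : Module.End R A) := by
    simpa using hnR.map (algebraMap R (Module.End R A))
  have hfnEnd : f.toLinearMap ^ n = 1 := by rw [← AlgEquiv.pow_toLinearMap, hfn]; rfl
  obtain ⟨U, hU⟩ := exists_sub_one_eq_mul_sq_of_pow_eq_one hfnEnd hnEnd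
  ext a
  have hdvd (k : ℕ) : algebraMap R A π ^ k ∣ f a - a :=
    Module.End.algebraMap_pow_dvd_of_eq_mul_sq hU (fun b ↦ Ideal.mem_span_singleton.mp (hf b)) k a
  exact sub_eq_zero.mp (IsLocalRing.eq_zero_of_forall_pow_dvd hπA hdvd)

/-- Let `R` be a discrete valuation ring with uniformizer `π` and residue
field `k`. Let `A` be a Noetherian local `R`-algebra in which `π` is not a unit (i.e. lies in
the maximal ideal of `A`), and let `f` be an `R`-algebra automorphism of `A` of finite order
`n`, where `n` is invertible in `k`. If `f` induces the identity on `A ⧸ πA`, then `f` is the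
identity on `A`. -/
theorem stmt0 {R A : Type*} [CommRing R] [IsDomain R] [IsDiscreteValuationRing R]
    [CommRing A] [IsNoetherianRing A] [IsLocalRing A] [Algebra R A]
    (π : R) (hπ : Irreducible π)
    (hπA : algebraMap R A π ∈ IsLocalRing.maximalIdeal A)
    (f : A ≃ₐ[R] A) (n : ℕ) (hn : 0 < n) (hfn : f ^ n = 1)
    (hk : (n : IsLocalRing.ResidueField R) ≠ 0)
    (hf : ∀ a : A, f a - a ∈ Ideal.span {algebraMap R A π}) :
    f = 1 :=
  stmt0_general π hπA f n hfn hk hf
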